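/- Let 1 ≤ γ ≤ β be positive integers with β even, and let p, n be positive integers with gcd(p,n) = 1 and with p odd or γ odd. Then ∏_{k=1}^{βn-1} ( 2 − e^{2πi p k/(βn)} − e^{2πi (γ n + p) k/(βn)} ) = n·2^{βn−1+δ_{γ even}} ∏_{k=1}^{β/2−1} ( 1 − 2 cos(2π(p + γn/2)k/β) cos^n(πγk/β) + cos^{2n}(πγk/β) ), where δ_{γ even} equals 1 if γ is even and 0 otherwise. -/

import Mathlib

/-!
Write `k = j + β t` with `0 ≤ j < β`, `0 ≤ t < n`. Half the adjacency eigenvalue,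
`w_k = (ζ^{pk} + ζ^{(γn+p)k}) / 2` with `ζ = e^{2πi/(βn)}`, satisfies `w_{j+βt} = w_j ε^t` where
`ε = e^{2πip/n}` is a primitive `n`-th root of unity because `gcd(p, n) = 1`. So for fixed `j` the
factors `1 - w_k` multiply to `1 - w_j^n`, and to `n` for `j = 0`, where the factor `k = 0` is
missing. Moreover `w_{β-j} = ε · conj w_j`, so the factors for `j` and `β - j` pair up to
`|1 - w_j^n|^2`, which the polar form `w_j = cos(πγj/β) e^{iφ_j}` makes explicit. The unpaired
middle factor `j = β/2` is `2` or `1` according to the parity of `γ`.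
-/

open Finset Real
open ComplexConjugate
open Complex (I)
open scoped Complex

theorem Nat.Icc_one_sub_one_eq_Ico (b : ℕ) : Icc 1 (b - 1) = Ico 1 b := by
  ext k
  simp only [mem_Icc, mem_Ico]
  omega

namespace Finset

variable {M : Type*} [CommMonoid M]

theorem prod_range_mul_eq_prod_prod (f : ℕ → M) (β n : ℕ) :
    ∏ k ∈ range (β * n), f k = ∏ j ∈ range β, ∏ t ∈ range n, f (j + β * t) := by
  induction n with
  | zero => simp
  | succ n ih =>
    rw [Nat.mul_succ, prod_range_add, ih, ← prod_mul_distrib]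
    exact prod_congr rfl fun j _ => by rw [prod_range_succ, add_comm (β * n) j]

theorem prod_Ico_one_mul_eq (f : ℕ → M) {β n : ℕ} (hβ : 0 < β) (hn : 0 < n) :
    ∏ k ∈ Ico 1 (β * n), f k
      = (∏ t ∈ Ico 1 n, f (β * t)) * ∏ j ∈ Ico 1 β, ∏ t ∈ range n, f (j + β * t) := by
  set g : ℕ → M := fun k => if k = 0 then 1 else f k
  have hg : ∀ k, 0 < k → f k = g k := fun k hk => (if_neg hk.ne').symm
  calc ∏ k ∈ Ico 1 (β * n), f k = ∏ k ∈ Ico 1 (β * n), g k :=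
        prod_congr rfl fun k hk => hg k (mem_Ico.mp hk).1
    _ = ∏ j ∈ range β, ∏ t ∈ range n, g (j + β * t) := by
        rw [← prod_range_mul_eq_prod_prod, prod_range_eq_mul_Ico g (Nat.mul_pos hβ hn)]
        simp [g]
    _ = _ := by
        rw [prod_range_eq_mul_Ico _ hβ, prod_range_eq_mul_Ico _ hn]
        simp only [g, zero_add, mul_zero, if_pos, one_mul]
        congr 1
        · exact prod_congr rfl fun t ht => (hg _ (Nat.mul_pos hβ (mem_Ico.mp ht).1)).symm
        · exact prod_congr rfl fun j hj => prod_congr rfl fun t _ =>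
            (hg _ (by have := (mem_Ico.mp hj).1; omega)).symm

theorem prod_Ico_one_two_mul_eq (f : ℕ → M) {m : ℕ} (hm : 0 < m) :
    ∏ j ∈ Ico 1 (2 * m), f j = (∏ j ∈ Ico 1 m, f j * f (2 * m - j)) * f m := by
  rw [prod_mul_distrib, prod_Ico_reflect f 1 (by omega : m ≤ 2 * m + 1), mul_right_comm,
    ← prod_Ico_succ_top hm,
    ← prod_Ico_consecutive _ (by omega : 1 ≤ m + 1) (by omega : m + 1 ≤ 2 * m),
    show 2 * m + 1 - m = m + 1 by omega, Nat.add_sub_cancel]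

end Finset

namespace IsPrimitiveRoot

variable {R : Type*} [CommRing R] [IsDomain R] {μ : R} {n : ℕ}

theorem prod_range_one_sub_mul_pow (hμ : IsPrimitiveRoot μ n) (hn : 0 < n) (x : R) :
    ∏ t ∈ range n, (1 - x * μ ^ t) = 1 - x ^ n := by
  have h := congrArg (Polynomial.eval 1) (X_pow_sub_C_eq_prod hμ hn (rfl : x ^ n = _))
  simp only [Polynomial.eval_sub, Polynomial.eval_pow, Polynomial.eval_X, Polynomial.eval_C,
    Polynomial.eval_prod, one_pow] at h
  rw [h]
  exact prod_congr rfl fun t _ => by ring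

theorem prod_Ico_one_one_sub_pow (hμ : IsPrimitiveRoot μ n) (hn : 0 < n) :
    ∏ t ∈ Ico 1 n, (1 - μ ^ t) = n := by
  obtain ⟨n, rfl⟩ := Nat.exists_eq_add_one_of_ne_zero hn.ne'
  rw [prod_Ico_eq_prod_range, Nat.add_sub_cancel, Nat.cast_succ, ← hμ.prod_one_sub_pow_eq_order]
  simp only [add_comm 1]

end IsPrimitiveRoot

namespace Complex

theorem exp_mul_I_add_exp_mul_I (x y : ℂ) :
    cexp (x * I) + cexp (y * I) = 2 * cos ((y - x) / 2) * cexp ((x + y) / 2 * I) := by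
  rw [two_cos, add_mul, ← exp_add, ← exp_add, add_comm (cexp (x * I))]
  congr 2 <;> ring

theorem normSq_one_sub_ofReal_mul_exp (r ψ : ℝ) :
    normSq (1 - r * cexp (ψ * I)) = 1 - 2 * Real.cos ψ * r + r ^ 2 := by
  simp only [normSq_apply, sub_re, one_re, mul_re, ofReal_re, exp_ofReal_mul_I_re, ofReal_im,
    exp_ofReal_mul_I_im, zero_mul, sub_zero, sub_im, one_im, mul_im, add_zero, zero_sub, mul_neg,
    neg_mul, neg_neg]
  linear_combination r ^ 2 * Real.sin_sq_add_cos_sq ψ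

end Complex

section HalfAdjEigenvalue

variable (β γ p n : ℕ)

noncomputable def halfAdjEigenvalue (k : ℕ) : ℂ :=
  (cexp (2 * π * I * p * k / (β * n)) + cexp (2 * π * I * (γ * n + p) * k / (β * n))) / 2

variable {β γ p n}

theorem halfAdjEigenvalue_zero : halfAdjEigenvalue β γ p n 0 = 1 := by
  simp [halfAdjEigenvalue]

theorem halfAdjEigenvalue_add_mul (hβ : β ≠ 0) (hn : n ≠ 0) (j t : ℕ) :
    halfAdjEigenvalue β γ p n (j + β * t)
      = halfAdjEigenvalue β γ p n j * cexp (2 * π * I * (p / n)) ^ t := by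
  have h₁ : cexp (2 * π * I * p * (j + β * t : ℕ) / (β * n))
      = cexp (2 * π * I * p * j / (β * n)) * cexp (2 * π * I * (p / n)) ^ t := by
    rw [← Complex.exp_nat_mul, ← Complex.exp_add]
    congr 1
    push_cast
    field_simp
  have h₂ : cexp (2 * π * I * (γ * n + p) * (j + β * t : ℕ) / (β * n))
      = cexp (2 * π * I * (γ * n + p) * j / (β * n)) * cexp (2 * π * I * (p / n)) ^ t := by
    rw [← Complex.exp_nat_mul, ← Complex.exp_add, ← one_mul (cexp (_ + _)),
      ← Complex.exp_nat_mul_two_pi_mul_I (γ * t), ← Complex.exp_add]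
    congr 1
    push_cast
    field_simp
    ring
  rw [halfAdjEigenvalue, halfAdjEigenvalue, h₁, h₂]
  ring

theorem halfAdjEigenvalue_sub (hβ : β ≠ 0) (hn : n ≠ 0) {j : ℕ} (hj : j ≤ β) :
    halfAdjEigenvalue β γ p n (β - j)
      = cexp (2 * π * I * (p / n)) * conj (halfAdjEigenvalue β γ p n j) := by
  have h₁ : cexp (2 * π * I * p * (β - j : ℕ) / (β * n))
      = cexp (2 * π * I * (p / n)) * conj (cexp (2 * π * I * p * j / (β * n))) := by
    rw [← Complex.exp_conj, ← Complex.exp_add]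
    congr 1
    simp only [map_div₀, map_mul, map_natCast, Complex.conj_ofReal, Complex.conj_I, map_ofNat]
    rw [Nat.cast_sub hj]
    field_simp
    ring
  have h₂ : cexp (2 * π * I * (γ * n + p) * (β - j : ℕ) / (β * n))
      = cexp (2 * π * I * (p / n)) * conj (cexp (2 * π * I * (γ * n + p) * j / (β * n))) := by
    rw [← Complex.exp_conj, ← one_mul (cexp (_ * _)), ← Complex.exp_nat_mul_two_pi_mul_I γ,
      ← Complex.exp_add, ← Complex.exp_add]
    congr 1
    simp only [map_div₀, map_mul, map_add, map_natCast, Complex.conj_ofReal, Complex.conj_I,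
      map_ofNat]
    rw [Nat.cast_sub hj]
    field_simp
    ring
  rw [halfAdjEigenvalue, halfAdjEigenvalue, h₁, h₂, map_div₀, map_add, map_ofNat]
  ring

theorem halfAdjEigenvalue_pow (hβ : β ≠ 0) (hn : n ≠ 0) (j : ℕ) :
    halfAdjEigenvalue β γ p n j ^ n
      = ((Real.cos (π * γ * j / β) ^ n : ℝ) : ℂ)
          * cexp ((2 * π * (p + γ * n / 2) * j / β : ℝ) * I) := by
  have hpolar : halfAdjEigenvalue β γ p n j
      = Complex.cos (π * γ * j / β) * cexp ((2 * π * (p + γ * n / 2) * j / (β * n) : ℂ) * I) := by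
    rw [halfAdjEigenvalue,
      show (2 * π * I * p * j / (β * n) : ℂ) = 2 * π * p * j / (β * n) * I by ring,
      show (2 * π * I * (γ * n + p) * j / (β * n) : ℂ) = 2 * π * (γ * n + p) * j / (β * n) * I by
        ring,
      Complex.exp_mul_I_add_exp_mul_I, mul_assoc, mul_div_cancel_left₀ _ two_ne_zero]
    congr 2 <;> field_simp <;> ring
  rw [hpolar, mul_pow, ← Complex.exp_nat_mul]
  push_cast
  congr 2
  field_simp

theorem one_sub_halfAdjEigenvalue_pow_mul (hβ : β ≠ 0) (hn : n ≠ 0) (hpn : p.gcd n = 1)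
    {j : ℕ} (hj : j ≤ β) :
    (1 - halfAdjEigenvalue β γ p n j ^ n) * (1 - halfAdjEigenvalue β γ p n (β - j) ^ n)
      = ((1 - 2 * Real.cos (2 * π * (p + γ * n / 2) * j / β) * Real.cos (π * γ * j / β) ^ n
          + Real.cos (π * γ * j / β) ^ (2 * n) : ℝ) : ℂ) := by
  have hε := (Complex.isPrimitiveRoot_exp_of_coprime p n hn hpn).pow_eq_one
  set z := halfAdjEigenvalue β γ p n j ^ n with hz
  have hconj : halfAdjEigenvalue β γ p n (β - j) ^ n = conj z := by
    rw [halfAdjEigenvalue_sub hβ hn hj, mul_pow, hε, one_mul, map_pow]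
  calc (1 - z) * (1 - halfAdjEigenvalue β γ p n (β - j) ^ n) = (1 - z) * conj (1 - z) := by
        rw [hconj, map_sub, map_one]
    _ = _ := by
        rw [Complex.mul_conj, hz, halfAdjEigenvalue_pow hβ hn,
          Complex.normSq_one_sub_ofReal_mul_exp, ← pow_mul, mul_comm n 2]

theorem one_sub_halfAdjEigenvalue_pow_half {m : ℕ} (hm : β = 2 * m) (hm0 : m ≠ 0) (hn : n ≠ 0)
    (hodd : Odd p ∨ Odd γ) :
    1 - halfAdjEigenvalue β γ p n m ^ n = if Even γ then 2 else 1 := by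
  have hw : halfAdjEigenvalue β γ p n m = cexp (π * I * p / n) * ((1 + (-1) ^ γ) / 2) := by
    have hexp : cexp (2 * π * I * (γ * n + p) * m / (β * n))
        = (-1) ^ γ * cexp (π * I * p / n) := by
      rw [← Complex.exp_pi_mul_I, ← Complex.exp_nat_mul, ← Complex.exp_add]
      congr 1
      subst hm
      push_cast
      field_simp
    rw [halfAdjEigenvalue, hexp]
    subst hm
    push_cast
    field_simp
  rcases Nat.even_or_odd γ with hγ | hγ
  · have hp : Odd p := hodd.resolve_right (Nat.not_odd_iff_even.mpr hγ)
    have hw' : halfAdjEigenvalue β γ p n m = cexp (π * I * p / n) := by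
      rw [hw, hγ.neg_one_pow]
      norm_num
    rw [if_pos hγ, hw', ← Complex.exp_nat_mul,
      show (n : ℂ) * (π * I * p / n) = p * (π * I) by field_simp, Complex.exp_nat_mul,
      Complex.exp_pi_mul_I, hp.neg_one_pow]
    norm_num
  · rw [if_neg (Nat.not_even_iff_odd.mpr hγ), hw, hγ.neg_one_pow]
    simp [hn]

theorem prod_Ico_one_sub_halfAdjEigenvalue (hβ : 0 < β) (hn : 0 < n) (hpn : p.gcd n = 1) :
    ∏ k ∈ Ico 1 (β * n), (1 - halfAdjEigenvalue β γ p n k)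
      = n * ∏ j ∈ Ico 1 β, (1 - halfAdjEigenvalue β γ p n j ^ n) := by
  have hε := Complex.isPrimitiveRoot_exp_of_coprime p n hn.ne' hpn
  rw [prod_Ico_one_mul_eq _ hβ hn]
  congr 1
  · rw [← hε.prod_Ico_one_one_sub_pow hn]
    refine prod_congr rfl fun t _ => ?_
    rw [← zero_add (β * t), halfAdjEigenvalue_add_mul hβ.ne' hn.ne', halfAdjEigenvalue_zero,
      one_mul]
  · refine prod_congr rfl fun j _ => ?_
    simp_rw [halfAdjEigenvalue_add_mul hβ.ne' hn.ne']
    exact hε.prod_range_one_sub_mul_pow hn _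

end HalfAdjEigenvalue

theorem stmt_5_general (β γ p n : ℕ) (hγ1 : 1 ≤ γ) (hγβ : γ ≤ β) (hβeven : Even β)
    (hn : 1 ≤ n) (hpn : Nat.gcd p n = 1) (hodd : Odd p ∨ Odd γ) :
    ∏ k ∈ Finset.Icc 1 (β * n - 1),
        ((2 : ℂ) - Complex.exp (2 * Real.pi * Complex.I * p * k / (β * n))
          - Complex.exp (2 * Real.pi * Complex.I * (γ * n + p) * k / (β * n)))
      = (n : ℂ) * 2 ^ (β * n - 1 + (if Even γ then 1 else 0)) *
        ∏ k ∈ Finset.Icc 1 (β / 2 - 1),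
          (((1 : ℝ)
              - 2 * Real.cos (2 * Real.pi * ((p : ℝ) + γ * n / 2) * k / β)
                  * Real.cos (Real.pi * γ * k / β) ^ n
              + Real.cos (Real.pi * γ * k / β) ^ (2 * n) : ℝ) : ℂ) := by
  obtain ⟨m, hm⟩ := even_iff_two_dvd.mp hβeven
  have hm0 : 0 < m := by omega
  have hβ : 0 < β := by omega
  calc _ = ∏ k ∈ Ico 1 (β * n), 2 * (1 - halfAdjEigenvalue β γ p n k) := by
        rw [Nat.Icc_one_sub_one_eq_Ico]
        exact prod_congr rfl fun k _ => by rw [halfAdjEigenvalue]; ring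
    _ = 2 ^ (β * n - 1) * (n * ((∏ j ∈ Ico 1 m, (1 - halfAdjEigenvalue β γ p n j ^ n)
          * (1 - halfAdjEigenvalue β γ p n (β - j) ^ n))
          * (1 - halfAdjEigenvalue β γ p n m ^ n))) := by
        rw [prod_mul_distrib, prod_const, Nat.card_Ico,
          prod_Ico_one_sub_halfAdjEigenvalue hβ hn hpn, hm, prod_Ico_one_two_mul_eq _ hm0]
    _ = _ := by
        rw [one_sub_halfAdjEigenvalue_pow_half hm hm0.ne' (by omega) hodd,
          show β / 2 = m by omega, Nat.Icc_one_sub_one_eq_Ico,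
          prod_congr rfl fun j hj => one_sub_halfAdjEigenvalue_pow_mul hβ.ne' (by omega) hpn
            (by have := (mem_Ico.mp hj).2; omega)]
        split_ifs <;> ring

/-- Number of spanning trees in the two-generated directed circulant graph
`C→^{p, γn+p}_{βn}` for even `β`, `gcd(p,n) = 1` and `p` or `γ` odd:
`∏_{k=1}^{βn−1} (2 − e^{2πipk/(βn)} − e^{2πi(γn+p)k/(βn)})
  = n·2^{βn−1+δ_{γ even}} ∏_{k=1}^{β/2−1} (1 − 2cos(2π(p+γn/2)k/β)cosⁿ(πγk/β) + cos^{2n}(πγk/β))`. -/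
theorem stmt_5 (β γ p n : ℕ) (hγ1 : 1 ≤ γ) (hγβ : γ ≤ β) (hβeven : Even β)
    (hp : 1 ≤ p) (hn : 1 ≤ n) (hpn : Nat.gcd p n = 1) (hodd : Odd p ∨ Odd γ) :
    ∏ k ∈ Finset.Icc 1 (β * n - 1),
        ((2 : ℂ) - Complex.exp (2 * Real.pi * Complex.I * p * k / (β * n))
          - Complex.exp (2 * Real.pi * Complex.I * (γ * n + p) * k / (β * n)))
      = (n : ℂ) * 2 ^ (β * n - 1 + (if Even γ then 1 else 0)) *
        ∏ k ∈ Finset.Icc 1 (β / 2 - 1),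
          (((1 : ℝ)
              - 2 * Real.cos (2 * Real.pi * ((p : ℝ) + γ * n / 2) * k / β)
                  * Real.cos (Real.pi * γ * k / β) ^ n
              + Real.cos (Real.pi * γ * k / β) ^ (2 * n) : ℝ) : ℂ) :=
  stmt_5_general β γ p n hγ1 hγβ hβeven hn hpn hodd
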